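/- arXiv:1410.7671 — 3 statements merged into one kernel-verified Lean document; each statement's English description precedes it below -/
import Mathlib

section
/- Let (γ_j)_{j≥1} be the partial sums of i.i.d. exponential random variables with rate c > 0 (γ_0 = 0). Then E[∏_{i=1}^∞ (1 − e^{−γ_i})] = e^{−c}, where the infinite product converges almost surely. -/
/-!
Put `φ x = exp (-c e^{-x})`. For `x ≥ 0` and `S ~ Exp(c)` one has
`φ x = E[(1 - e^{-(x+S)}) φ (x + S)]`, because `-e^{-cs} φ (x + s)` is an antiderivative of the
integrand against the density `c e^{-cs}`. Since `X_n` is independent of `γ_1, …, γ_n`, the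
expectation of `M_n = (∏_{i ≤ n} (1 - e^{-γ_i})) φ(γ_n)` is therefore independent of `n`, equal to
`M_0 = φ 0 = e^{-c}`. As `E[e^{-γ_i}] = (c/(c+1))^i`, the series `∑ e^{-γ_i}` converges almost
surely; so the product converges, `φ(γ_n) → 1`, and dominated convergence (`0 ≤ M_n ≤ 1`) passes
to the limit.
-/

open MeasureTheory ProbabilityTheory Real Set Filter Topology

section ExpMeasure

variable {c : ℝ}

lemma expMeasure_eq_withDensity : expMeasure c = volume.withDensity (exponentialPDF c) := rfl

lemma integral_expMeasure_eq_integral_Ioi (hc : 0 < c) (f : ℝ → ℝ) :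
    ∫ s, f s ∂expMeasure c = ∫ s in Ioi 0, c * exp (-(c * s)) * f s := by
  have hpdf (s : ℝ) : (exponentialPDF c s).toReal • f s =
      (Ici 0).indicator (fun s ↦ c * exp (-(c * s)) * f s) s := by
    rw [exponentialPDF_eq, ENNReal.toReal_ofReal (by split_ifs <;> positivity)]
    by_cases hs : 0 ≤ s <;> simp [hs]
  rw [expMeasure_eq_withDensity,
    integral_withDensity_eq_integral_toReal_smul (f := exponentialPDF c)
      (measurable_exponentialPDFReal c).ennreal_ofReal (ae_of_all _ fun _ ↦ ENNReal.ofReal_lt_top)]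
  simp_rw [hpdf]
  rw [integral_indicator measurableSet_Ici, integral_Ici_eq_integral_Ioi]

lemma expMeasure_ae_nonneg : ∀ᵐ s ∂expMeasure c, 0 ≤ s := by
  have h : expMeasure c (Iio 0) = 0 := by
    rw [expMeasure_eq_withDensity, withDensity_apply _ measurableSet_Iio]
    exact lintegral_exponentialPDF_of_nonpos le_rfl
  filter_upwards [measure_eq_zero_iff_ae_notMem.mp h] with s hs
  simpa using hs

lemma integral_exp_neg_expMeasure (hc : 0 < c) : ∫ s, exp (-s) ∂expMeasure c = c / (c + 1) := by
  rw [integral_expMeasure_eq_integral_Ioi hc]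
  have h (s : ℝ) : c * exp (-(c * s)) * exp (-s) = c * exp (-(c + 1) * s) := by
    rw [mul_assoc, ← exp_add]; ring_nf
  simp_rw [h]
  rw [integral_const_mul, integral_exp_mul_Ioi (by linarith)]
  field_simp
  simp

lemma integral_one_sub_exp_mul_exp_expMeasure (hc : 0 < c) {x : ℝ} (hx : 0 ≤ x) :
    ∫ s, (1 - exp (-(x + s))) * exp (-(c * exp (-(x + s)))) ∂expMeasure c =
      exp (-(c * exp (-x))) := by
  rw [integral_expMeasure_eq_integral_Ioi hc]
  have hderiv (s : ℝ) : HasDerivAt (fun s ↦ -(exp (-(c * s)) * exp (-(c * exp (-(x + s))))))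
      (c * exp (-(c * s)) * ((1 - exp (-(x + s))) * exp (-(c * exp (-(x + s)))))) s := by
    have h₁ : HasDerivAt (fun s ↦ exp (-(c * s))) (-c * exp (-(c * s))) s := by
      simpa [mul_comm] using ((hasDerivAt_id' s).const_mul c).fun_neg.exp
    have h₂ : HasDerivAt (fun s ↦ exp (-(c * exp (-(x + s)))))
        (c * exp (-(x + s)) * exp (-(c * exp (-(x + s))))) s := by
      simpa [mul_comm] using (((hasDerivAt_id' s).const_add x).fun_neg.exp.const_mul c).fun_neg.exp
    exact (h₁.fun_mul h₂).fun_neg.congr_deriv (by ring)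
  have hlim : Tendsto (fun s ↦ -(exp (-(c * s)) * exp (-(c * exp (-(x + s)))))) atTop (𝓝 0) := by
    have hexp {a : ℝ → ℝ} (ha : Tendsto a atTop atTop) :
        Tendsto (fun s ↦ exp (-a s)) atTop (𝓝 0) :=
      tendsto_exp_neg_atTop_nhds_zero.comp ha
    have h₁ := hexp (tendsto_id.const_mul_atTop hc)
    have h₂ : Tendsto (fun s ↦ exp (-(c * exp (-(x + s))))) atTop (𝓝 1) := by
      have := ((hexp (tendsto_atTop_add_const_left _ x tendsto_id)).const_mul c).neg
      simpa [Function.comp_def] using (continuous_exp.tendsto _).comp this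
    simpa using (h₁.mul h₂).neg
  rw [integral_Ioi_of_hasDerivAt_of_nonneg' (fun s _ ↦ hderiv s) ?_ hlim]
  · simp
  · intro s hs
    have : 0 ≤ 1 - exp (-(x + s)) := sub_nonneg.2 (exp_le_one_iff.2 (by linarith [mem_Ioi.1 hs]))
    positivity

end ExpMeasure

namespace ProbabilityTheory

variable {Ω α β : Type*} {mΩ : MeasurableSpace Ω} [MeasurableSpace α] [MeasurableSpace β]
  {μ : Measure Ω}

lemma IndepFun.integral_comp_eq_integral_integral_map [IsFiniteMeasure μ] {Y : Ω → α} {Z : Ω → β}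
    (hYZ : IndepFun Y Z μ) (hY : Measurable Y) (hZ : Measurable Z) {f : α → β → ℝ}
    (hf : Measurable (Function.uncurry f)) (hint : Integrable (fun ω ↦ f (Y ω) (Z ω)) μ) :
    ∫ ω, f (Y ω) (Z ω) ∂μ = ∫ ω, ∫ z, f (Y ω) z ∂μ.map Z ∂μ := by
  have hmap : μ.map (fun ω ↦ (Y ω, Z ω)) = (μ.map Y).prod (μ.map Z) :=
    (indepFun_iff_map_prod_eq_prod_map_map hY.aemeasurable hZ.aemeasurable).mp hYZ
  have hint' : Integrable (Function.uncurry f) ((μ.map Y).prod (μ.map Z)) := by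
    rw [← hmap, integrable_map_measure hf.aestronglyMeasurable (hY.prodMk hZ).aemeasurable]
    exact hint
  calc ∫ ω, f (Y ω) (Z ω) ∂μ = ∫ p, Function.uncurry f p ∂(μ.map Y).prod (μ.map Z) := by
        rw [← hmap, integral_map (hY.prodMk hZ).aemeasurable hf.aestronglyMeasurable]; rfl
    _ = ∫ y, ∫ z, f y z ∂μ.map Z ∂μ.map Y := integral_prod _ hint'
    _ = ∫ ω, ∫ z, f (Y ω) z ∂μ.map Z ∂μ :=
        integral_map hY.aemeasurable hint'.integral_prod_left.aestronglyMeasurable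

lemma iIndepFun.indepFun_of_measurable_iSup_lt {X : ℕ → Ω → β} (hX : iIndepFun X μ)
    (hXm : ∀ m, Measurable (X m)) {n : ℕ} {Y : Ω → α}
    (hY : Measurable[⨆ m ∈ Iio n, MeasurableSpace.comap (X m) ‹_›] Y) : IndepFun Y (X n) μ := by
  rw [IndepFun_iff_Indep]
  refine indep_of_indep_of_le
    (indep_iSup_of_disjoint (fun m ↦ (hXm m).comap_le) hX.iIndep (S := Iio n) (T := {n})
      (by simp)) hY.comap_le ?_
  exact le_iSup₂ (f := fun m (_ : m ∈ ({n} : Set ℕ)) ↦ MeasurableSpace.comap (X m) ‹_›) n rfl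

end ProbabilityTheory

namespace MeasureTheory

variable {Ω ι : Type*} {mΩ : MeasurableSpace Ω} {μ : Measure Ω}

lemma ae_summable_of_summable_integral_norm [Countable ι] {f : ι → Ω → ℝ}
    (hf : ∀ i, Integrable (f i) μ) (hsum : Summable fun i ↦ ∫ ω, ‖f i ω‖ ∂μ) :
    ∀ᵐ ω ∂μ, Summable fun i ↦ f i ω := by
  refine (summable_norm_of_tsum_eLpNorm_ne_top le_rfl (fun i ↦ (hf i).aestronglyMeasurable)
    ?_).mono fun ω h ↦ h.of_norm
  simp_rw [eLpNorm_one_eq_lintegral_enorm, ← ofReal_integral_norm_eq_lintegral_enorm (hf _)]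
  rw [← ENNReal.ofReal_tsum_of_nonneg (fun i ↦ integral_nonneg fun ω ↦ norm_nonneg _) hsum]
  exact ENNReal.ofReal_ne_top

end MeasureTheory

lemma prod_one_sub_exp_neg_mem_Icc {ι : Type*} {s : Finset ι} {t : ι → ℝ}
    (ht : ∀ i ∈ s, 0 ≤ t i) : ∏ i ∈ s, (1 - exp (-t i)) ∈ Icc (0 : ℝ) 1 :=
  Finset.prod_induction _ (· ∈ Icc (0 : ℝ) 1) (fun _ _ ↦ unitInterval.mul_mem) unitInterval.one_mem
    fun i hi ↦
      ⟨sub_nonneg.2 (exp_le_one_iff.2 (neg_nonpos.2 (ht i hi))), sub_le_self _ (exp_pos _).le⟩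

lemma exp_neg_mul_exp_neg_mem_Icc {c : ℝ} (hc : 0 ≤ c) (t : ℝ) :
    exp (-(c * exp (-t))) ∈ Icc (0 : ℝ) 1 :=
  ⟨(exp_pos _).le, exp_le_one_iff.2 (neg_nonpos.2 (by positivity))⟩

lemma multipliable_one_sub_of_summable {f : ℕ → ℝ} (hf : Summable f) :
    Multipliable fun i ↦ 1 - f i := by
  simpa [← sub_eq_add_neg] using Real.multipliable_one_add_of_summable hf.neg

lemma tendsto_prod_one_sub_exp_neg_mul {c : ℝ} {g : ℕ → ℝ}
    (hg : Summable fun i ↦ exp (-g (i + 1))) :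
    Tendsto (fun n ↦ (∏ i ∈ Finset.range n, (1 - exp (-g (i + 1)))) * exp (-(c * exp (-g n))))
      atTop (𝓝 (∏' i, (1 - exp (-g (i + 1))))) := by
  have hexp : Tendsto (fun n ↦ exp (-(c * exp (-g n)))) atTop (𝓝 1) := by
    have h := (tendsto_add_atTop_iff_nat (f := fun n ↦ exp (-g n)) 1).mp hg.tendsto_atTop_zero
    simpa [Function.comp_def] using (continuous_exp.tendsto _).comp (h.const_mul c).neg
  simpa using (multipliable_one_sub_of_summable hg).hasProd.tendsto_prod_nat.mul hexp

section PartialSums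

variable {Ω : Type*} {c : ℝ} {X γ : ℕ → Ω → ℝ}

lemma measurable_iSup_lt_partialSum (hγ : ∀ j ω, γ j ω = ∑ m ∈ Finset.range j, X m ω)
    {j n : ℕ} (hjn : j ≤ n) :
    Measurable[⨆ m ∈ Iio n, MeasurableSpace.comap (X m) inferInstance] (γ j) := by
  rw [show γ j = fun ω ↦ ∑ m ∈ Finset.range j, X m ω from funext (hγ j)]
  refine Finset.measurable_sum _ fun m hm ↦ (comap_measurable (X m)).mono ?_ le_rfl
  exact le_iSup₂ (f := fun m (_ : m ∈ Iio n) ↦ MeasurableSpace.comap (X m) inferInstance) m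
    (by simp only [Finset.mem_range] at hm; exact mem_Iio.2 (by omega))

variable [MeasureSpace Ω]

lemma measurable_partialSum (hmeas : ∀ m, Measurable (X m))
    (hγ : ∀ j ω, γ j ω = ∑ m ∈ Finset.range j, X m ω) (j : ℕ) : Measurable (γ j) := by
  rw [show γ j = fun ω ↦ ∑ m ∈ Finset.range j, X m ω from funext (hγ j)]
  exact Finset.measurable_sum _ fun m _ ↦ hmeas m

lemma indepFun_prod_partialSum (hmeas : ∀ m, Measurable (X m)) (hindep : iIndepFun X ℙ)
    (hγ : ∀ j ω, γ j ω = ∑ m ∈ Finset.range j, X m ω) (n : ℕ) :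
    IndepFun (fun ω ↦ (∏ i ∈ Finset.range n, (1 - exp (-γ (i + 1) ω)), γ n ω)) (X n) ℙ := by
  refine hindep.indepFun_of_measurable_iSup_lt hmeas (Measurable.prodMk ?_ ?_)
  · refine Finset.measurable_prod _ fun i hi ↦ measurable_const.sub ?_
    exact (measurable_iSup_lt_partialSum hγ (Finset.mem_range.1 hi)).neg.exp
  · exact measurable_iSup_lt_partialSum hγ le_rfl

lemma ae_nonneg_partialSum (hmeas : ∀ m, Measurable (X m))
    (hdist : ∀ m, Measure.map (X m) ℙ = expMeasure c)
    (hγ : ∀ j ω, γ j ω = ∑ m ∈ Finset.range j, X m ω) : ∀ᵐ ω ∂ℙ, ∀ j, 0 ≤ γ j ω := by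
  have hX : ∀ᵐ ω ∂ℙ, ∀ m, 0 ≤ X m ω := ae_all_iff.2 fun m ↦
    ae_of_ae_map (hmeas m).aemeasurable (by rw [hdist m]; exact expMeasure_ae_nonneg)
  filter_upwards [hX] with ω hω j
  rw [hγ]
  exact Finset.sum_nonneg fun m _ ↦ hω m

lemma ae_prod_one_sub_exp_mul_exp_mem_Icc (hc : 0 ≤ c) (hmeas : ∀ m, Measurable (X m))
    (hdist : ∀ m, Measure.map (X m) ℙ = expMeasure c)
    (hγ : ∀ j ω, γ j ω = ∑ m ∈ Finset.range j, X m ω) :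
    ∀ᵐ ω ∂ℙ, ∀ n, (∏ i ∈ Finset.range n, (1 - exp (-γ (i + 1) ω))) *
      exp (-(c * exp (-γ n ω))) ∈ Icc (0 : ℝ) 1 := by
  filter_upwards [ae_nonneg_partialSum hmeas hdist hγ] with ω hω n
  exact unitInterval.mul_mem (prod_one_sub_exp_neg_mem_Icc fun i _ ↦ hω _)
    (exp_neg_mul_exp_neg_mem_Icc hc _)

lemma integral_exp_neg_partialSum (hc : 0 < c) (hmeas : ∀ m, Measurable (X m))
    (hindep : iIndepFun X ℙ) (hdist : ∀ m, Measure.map (X m) ℙ = expMeasure c)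
    (hγ : ∀ j ω, γ j ω = ∑ m ∈ Finset.range j, X m ω) (j : ℕ) :
    ∫ ω, exp (-γ j ω) ∂ℙ = (c / (c + 1)) ^ j := by
  have h := hindep.mgf_sum hmeas (Finset.range j) (t := -1)
  simp_rw [← mgf_id_map (hmeas _).aemeasurable, hdist] at h
  simpa [mgf, Finset.sum_apply, ← hγ, integral_exp_neg_expMeasure hc, div_pow] using h

variable [IsProbabilityMeasure (ℙ : Measure Ω)]

lemma ae_summable_exp_neg_partialSum (hc : 0 < c) (hmeas : ∀ m, Measurable (X m))
    (hindep : iIndepFun X ℙ) (hdist : ∀ m, Measure.map (X m) ℙ = expMeasure c)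
    (hγ : ∀ j ω, γ j ω = ∑ m ∈ Finset.range j, X m ω) :
    ∀ᵐ ω ∂ℙ, Summable fun i ↦ exp (-γ (i + 1) ω) := by
  refine ae_summable_of_summable_integral_norm (fun i ↦ ?_) ?_
  · refine Integrable.of_mem_Icc 0 1 (measurable_partialSum hmeas hγ _).neg.exp.aemeasurable ?_
    filter_upwards [ae_nonneg_partialSum hmeas hdist hγ] with ω hω
    exact ⟨(exp_pos _).le, exp_le_one_iff.2 (neg_nonpos.2 (hω _))⟩
  · simp_rw [Real.norm_of_nonneg (exp_pos _).le,
      integral_exp_neg_partialSum hc hmeas hindep hdist hγ]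
    exact (summable_nat_add_iff 1).2 (summable_geometric_of_lt_one (by positivity)
      ((div_lt_one (by linarith)).2 (by linarith)))

lemma integral_prod_one_sub_exp_mul_exp (hc : 0 < c) (hmeas : ∀ m, Measurable (X m))
    (hindep : iIndepFun X ℙ) (hdist : ∀ m, Measure.map (X m) ℙ = expMeasure c)
    (hγ : ∀ j ω, γ j ω = ∑ m ∈ Finset.range j, X m ω) (n : ℕ) :
    ∫ ω, (∏ i ∈ Finset.range n, (1 - exp (-γ (i + 1) ω))) * exp (-(c * exp (-γ n ω))) ∂ℙ =
      exp (-c) := by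
  induction n with
  | zero => simp [hγ]
  | succ n ih =>
    rw [← ih]
    set P : Ω → ℝ := fun ω ↦ ∏ i ∈ Finset.range n, (1 - exp (-γ (i + 1) ω))
    set H : ℝ → ℝ := fun t ↦ (1 - exp (-t)) * exp (-(c * exp (-t)))
    have hsucc (ω : Ω) : (∏ i ∈ Finset.range (n + 1), (1 - exp (-γ (i + 1) ω))) *
        exp (-(c * exp (-γ (n + 1) ω))) = P ω * H (γ n ω + X n ω) := by
      rw [Finset.prod_range_succ, hγ (n + 1), Finset.sum_range_succ, ← hγ n]
      ring
    have hγm := measurable_partialSum hmeas hγ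
    have hint : Integrable (fun ω ↦ P ω * H (γ n ω + X n ω)) ℙ := by
      refine Integrable.of_mem_Icc 0 1 (by fun_prop) ?_
      filter_upwards [ae_prod_one_sub_exp_mul_exp_mem_Icc hc.le hmeas hdist hγ] with ω hω
      exact hsucc ω ▸ hω (n + 1)
    simp_rw [hsucc]
    refine ((indepFun_prod_partialSum hmeas hindep hγ n).integral_comp_eq_integral_integral_map
      (f := fun y s ↦ y.1 * H (y.2 + s)) (by fun_prop) (hmeas n) (by fun_prop) hint).trans ?_
    rw [hdist]
    refine integral_congr_ae ?_
    filter_upwards [ae_nonneg_partialSum hmeas hdist hγ] with ω hω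
    rw [integral_const_mul, integral_one_sub_exp_mul_exp_expMeasure hc (hω n)]

end PartialSums

/-- Let `(γ_j)_{j≥1}` be the partial sums of i.i.d. exponential(c) random
variables. Then `E[∏_{i=1}^∞ (1 − e^{−γ_i})] = e^{−c}`. -/
theorem stmt_4 {Ω : Type*} [MeasureSpace Ω] [IsProbabilityMeasure (ℙ : Measure Ω)]
    (c : ℝ) (hc : 0 < c) (X : ℕ → Ω → ℝ)
    (hmeas : ∀ m, Measurable (X m))
    (hindep : iIndepFun X ℙ)
    (hdist : ∀ m, Measure.map (X m) ℙ = expMeasure c)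
    (γ : ℕ → Ω → ℝ) (hγ : ∀ j ω, γ j ω = ∑ m ∈ Finset.range j, X m ω) :
    (∀ᵐ ω ∂ℙ, Multipliable (fun i : ℕ => 1 - Real.exp (-γ (i + 1) ω))) ∧
    ∫ ω, ∏' i : ℕ, (1 - Real.exp (-γ (i + 1) ω)) ∂ℙ = Real.exp (-c) := by
  have hsum := ae_summable_exp_neg_partialSum hc hmeas hindep hdist hγ
  have hγm := measurable_partialSum hmeas hγ
  have hlim : Tendsto (fun n ↦ ∫ ω, (∏ i ∈ Finset.range n, (1 - exp (-γ (i + 1) ω))) *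
      exp (-(c * exp (-γ n ω))) ∂ℙ) atTop (𝓝 (∫ ω, ∏' i, (1 - exp (-γ (i + 1) ω)) ∂ℙ)) :=
    tendsto_integral_of_dominated_convergence (fun _ ↦ 1) (fun n ↦ by fun_prop)
      (integrable_const 1)
      (fun n ↦ (ae_prod_one_sub_exp_mul_exp_mem_Icc hc.le hmeas hdist hγ).mono fun ω hω ↦
        abs_le.2 ⟨by linarith [(hω n).1], (hω n).2⟩)
      (hsum.mono fun ω hω ↦ tendsto_prod_one_sub_exp_neg_mul (g := (γ · ω)) hω)
  simp only [integral_prod_one_sub_exp_mul_exp hc hmeas hindep hdist hγ] at hlim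
  exact ⟨hsum.mono fun ω hω ↦ multipliable_one_sub_of_summable hω,
    tendsto_nhds_unique hlim tendsto_const_nhds⟩
end

section
/- A size-biased pick from a discrete stick-breaking process on [n] is uniformly distributed on {1, …, n}. That is, if S_n(0) is uniform on {1,…,n}, and inductively S_n(i) is uniform on {1, …, n − S_n(0) − ⋯ − S_n(i−1)} given the remainder is positive (and 0 otherwise), and if S̃_n is a size-biased pick from the resulting sequence, then P(S̃_n = k) = 1/n for every k ∈ {1,…,n}. -/
/-!
Write `E n k` for the expected number of blocks of size `k` in the stick-breaking process
on `[n]`. Conditioning on the first block `s`, which is uniform on `{1, …, n}`, gives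
`n · E n k = ∑_{s=1}^{n} (E (n - s) k + [s = k])`, and strong induction on `n` shows
`E n k = 1/k` for `1 ≤ k ≤ n` (and `0` for `k > n`): exactly `n - k` of the `n` choices of `s`
leave room for a block of size `k`, and one more is such a block. Hence the size-biased pick
equals `k` with probability `(k/n) · E n k = 1/n`.
-/

open scoped ENNReal

/-- The discrete stick-breaking process on `[n]`: the first block size is
uniform on `{1,…,n}`, and inductively each block size is uniform on the
remaining total, until the total `n` is exhausted. The resulting random
sequence of block sizes is encoded as a `PMF` on lists. -/
noncomputable def stickBreaking : ℕ → PMF (List ℕ)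
  | 0 => PMF.pure []
  | (n + 1) =>
    (PMF.uniformOfFinset ((Finset.Icc 1 (n + 1)).attach)
      (Finset.attach_nonempty_iff.2 ⟨1, by simp⟩)).bind
      fun s => (stickBreaking (n + 1 - s.1)).map (List.cons s.1)
  decreasing_by
    have hs := s.2
    rw [Finset.mem_Icc] at hs
    omega

namespace PMF

variable {α β : Type*}

lemma tsum_pure_mul (a : α) (g : α → ℝ≥0∞) : ∑' b, pure a b * g b = g a := by
  rw [tsum_eq_single a]
  · simp
  · intro b hb
    simp [pure_apply, hb]

lemma tsum_bind_mul (p : PMF α) (f : α → PMF β) (g : β → ℝ≥0∞) :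
    ∑' b, p.bind f b * g b = ∑' a, p a * ∑' b, f a b * g b := by
  calc ∑' b, p.bind f b * g b
      = ∑' b, ∑' a, p a * f a b * g b := by
        simp only [bind_apply, ENNReal.tsum_mul_right]
    _ = ∑' a, ∑' b, p a * f a b * g b := ENNReal.tsum_comm
    _ = ∑' a, p a * ∑' b, f a b * g b := by
        simp only [← ENNReal.tsum_mul_left, mul_assoc]

lemma tsum_map_mul (p : PMF α) (f : α → β) (g : β → ℝ≥0∞) :
    ∑' b, p.map f b * g b = ∑' a, p a * g (f a) := by
  simp only [map, tsum_bind_mul, Function.comp_apply, tsum_pure_mul]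

end PMF

open Finset

lemma tsum_stickBreaking_succ_mul (n : ℕ) (g : List ℕ → ℝ≥0∞) :
    ∑' l, stickBreaking (n + 1) l * g l
      = (n + 1 : ℝ≥0∞)⁻¹ * ∑ s ∈ Icc 1 (n + 1), ∑' r, stickBreaking (n + 1 - s) r * g (s :: r) := by
  rw [stickBreaking, PMF.tsum_bind_mul, tsum_fintype, mul_sum, univ_eq_attach,
    ← sum_attach (Icc 1 (n + 1))]
  refine sum_congr rfl fun s _ => ?_
  rw [PMF.tsum_map_mul, PMF.uniformOfFinset_apply]
  simp

lemma tsum_mul_count_cons (p : PMF (List ℕ)) (s k : ℕ) :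
    ∑' r, p r * ((s :: r).count k : ℝ≥0∞)
      = ∑' r, p r * (r.count k : ℝ≥0∞) + if s = k then 1 else 0 := by
  simp only [List.count_cons, beq_iff_eq, Nat.cast_add, Nat.cast_ite, Nat.cast_one,
    Nat.cast_zero, mul_add, ENNReal.tsum_add, ENNReal.tsum_mul_right, PMF.tsum_coe, one_mul]

lemma card_filter_le_sub (n k : ℕ) :
    #{s ∈ Icc 1 n | k ≤ n - s} = n - k := by
  have : {s ∈ Icc 1 n | k ≤ n - s} = Icc 1 (n - k) := by
    ext s
    simp only [mem_filter, mem_Icc]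
    omega
  rw [this, Nat.card_Icc, Nat.add_sub_cancel]

lemma tsum_stickBreaking_mul_count {k : ℕ} (hk : 1 ≤ k) (n : ℕ) :
    ∑' l, stickBreaking n l * (l.count k : ℝ≥0∞) = if k ≤ n then (k : ℝ≥0∞)⁻¹ else 0 := by
  induction n using Nat.strong_induction_on with
  | _ n ih =>
  match n with
  | 0 => simp [stickBreaking]; omega
  | n + 1 =>
    have hsum : ∑ s ∈ Icc 1 (n + 1), ∑' r, stickBreaking (n + 1 - s) r * ((s :: r).count k : ℝ≥0∞)
        = ((n + 1 - k : ℕ) : ℝ≥0∞) * (k : ℝ≥0∞)⁻¹ + if k ≤ n + 1 then 1 else 0 := by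
      have hk_mem : k ∈ Icc 1 (n + 1) ↔ k ≤ n + 1 := by simp [hk]
      simp_rw [tsum_mul_count_cons]
      rw [sum_add_distrib, sum_ite_eq', ← card_filter_le_sub, card_eq_sum_ones, Nat.cast_sum,
        sum_mul, sum_filter, if_congr hk_mem rfl rfl]
      congr 1
      refine sum_congr rfl fun s hs => ?_
      rw [ih (n + 1 - s) (by simp at hs; omega)]
      split_ifs <;> simp
    rw [tsum_stickBreaking_succ_mul, hsum]
    split_ifs with h
    · have hk0 : (k : ℝ≥0∞) ≠ 0 := by exact_mod_cast (by omega : k ≠ 0)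
      have hcount : ((n + 1 - k : ℕ) : ℝ≥0∞) * (k : ℝ≥0∞)⁻¹ + 1 = (n + 1) * (k : ℝ≥0∞)⁻¹ := by
        calc ((n + 1 - k : ℕ) : ℝ≥0∞) * (k : ℝ≥0∞)⁻¹ + 1
            = ((n + 1 - k : ℕ) + k : ℝ≥0∞) * (k : ℝ≥0∞)⁻¹ := by
              rw [add_mul, ENNReal.mul_inv_cancel hk0 (ENNReal.natCast_ne_top k)]
          _ = (n + 1) * (k : ℝ≥0∞)⁻¹ := by
              rw [← Nat.cast_add, Nat.sub_add_cancel h, Nat.cast_succ]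
      rw [hcount, ← mul_assoc, ENNReal.inv_mul_cancel (by simp) (by simp), one_mul]
    · simp [show n + 1 - k = 0 by omega]

theorem stmt_6_general (n : ℕ) (k : ℕ) (hk : k ∈ Finset.Icc 1 n) :
    ∑' l : List ℕ, stickBreaking n l * ((l.count k : ℝ≥0∞) * k / n) = 1 / n := by
  rw [Finset.mem_Icc] at hk
  have hk0 : (k : ℝ≥0∞) ≠ 0 := by exact_mod_cast (by omega : k ≠ 0)
  calc ∑' l : List ℕ, stickBreaking n l * ((l.count k : ℝ≥0∞) * k / n)
      = (∑' l, stickBreaking n l * (l.count k : ℝ≥0∞)) * (k / n) := by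
        simp only [← ENNReal.tsum_mul_right, mul_div_assoc, mul_assoc]
    _ = (k : ℝ≥0∞)⁻¹ * (k / n) := by rw [tsum_stickBreaking_mul_count hk.1, if_pos hk.2]
    _ = 1 / n := by
        rw [div_eq_mul_inv, ← mul_assoc, ENNReal.inv_mul_cancel hk0 (ENNReal.natCast_ne_top k),
          one_mul, one_div]

/-- A size-biased pick from a discrete stick-breaking process on `[n]` is
uniform on `{1,…,n}`: the size-biased pick equals `k` with probability
`E[#{i : S_n(i) = k}·k/n]`, and this equals `1/n` for every `k ∈ {1,…,n}`. -/
theorem stmt_6 (n : ℕ) (hn : 1 ≤ n) (k : ℕ) (hk : k ∈ Finset.Icc 1 n) :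
    ∑' l : List ℕ, stickBreaking n l * ((l.count k : ℝ≥0∞) * k / n) = 1 / n :=
  stmt_6_general n k hk
end

section
/- Let x > 0 and let (v_n) be a sequence of integers with v_n → ∞ and v_n/n → 0. With p_n(ℓ) = (v_n−1)·(n−v_n)!/(n−v_n−ℓ)!·(n−ℓ−2)!/(n−1)!, one has p_n(⌊x n / v_n⌋) · (n/v_n) → e^{−x} as n → ∞. -/
/-!
Cancelling factorials,
`p_n(ℓ) · n / v = (v - 1) / v · n / (n - 1 - ℓ) · ∏_{i < ℓ} (1 - (v - 1) / (n - 1 - i))`.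
Each factor of the product lies between `1 - (v - 1) / (n - ℓ)` and `1 - (v - 1) / (n - 1)`, and the
`ℓ`-th powers of both bounds tend to `e^{-x}`: with `a` the subtracted term, `ℓ a → x` because
`ℓ v / n → x` (this is where `ℓ = ⌊x n / v⌋` enters), and `ℓ log (1 - a)` is squeezed between
`-ℓ a / (1 - a)` and `-ℓ a`. The prefactors tend to `1` since `v → ∞` and `ℓ / n ≤ x / v → 0`.
-/

open Filter Topology Finset

section Exponential

variable {α : Type*} {l : Filter α} {a : α → ℝ} {t : ℝ}

lemma tendsto_mul_log_one_add_of_tendsto_mul {k : α → ℝ} (ha : Tendsto a l (𝓝 0))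
    (hk : Tendsto (fun i => k i * a i) l (𝓝 t)) (hk0 : ∀ᶠ i in l, 0 ≤ k i) :
    Tendsto (fun i => k i * Real.log (1 + a i)) l (𝓝 t) := by
  have hlower : Tendsto (fun i => k i * a i * (1 + a i)⁻¹) l (𝓝 t) := by
    have h1a : Tendsto (fun i => (1 + a i)⁻¹) l (𝓝 1) := by
      simpa using ((tendsto_const_nhds (x := (1 : ℝ))).add ha).inv₀ (by norm_num)
    simpa using hk.mul h1a
  refine tendsto_of_tendsto_of_tendsto_of_le_of_le' hlower hk ?_ ?_
  all_goals
    filter_upwards [hk0, ha.eventually_const_lt (show (-1 : ℝ) < 0 by norm_num)] with i hki hai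
    have hpos : 0 < 1 + a i := by linarith
  · have := Real.one_sub_inv_le_log_of_pos hpos
    calc k i * a i * (1 + a i)⁻¹ = k i * (1 - (1 + a i)⁻¹) := by field_simp; ring
      _ ≤ _ := by gcongr
  · have := Real.log_le_sub_one_of_pos hpos
    gcongr
    linarith

lemma tendsto_one_add_pow_exp_of_tendsto_mul {k : α → ℕ} (ha : Tendsto a l (𝓝 0))
    (hk : Tendsto (fun i => k i * a i) l (𝓝 t)) :
    Tendsto (fun i => (1 + a i) ^ k i) l (𝓝 (Real.exp t)) := by
  refine ((Real.continuous_exp.tendsto t).comp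
    (tendsto_mul_log_one_add_of_tendsto_mul ha hk (.of_forall fun i => by positivity))).congr' ?_
  filter_upwards [ha.eventually_const_lt (show (-1 : ℝ) < 0 by norm_num)] with i hai
  rw [Function.comp_apply, ← Real.log_pow, Real.exp_log (pow_pos (by linarith) _)]

end Exponential

lemma tendsto_div_natCast_sub {f g : ℕ → ℝ} {c : ℝ}
    (hf : Tendsto (fun n => f n / n) atTop (𝓝 c)) (hg : Tendsto (fun n => g n / n) atTop (𝓝 0)) :
    Tendsto (fun n => f n / (n - g n)) atTop (𝓝 c) := by
  have h := hf.div ((tendsto_const_nhds (x := (1 : ℝ))).sub hg) (by norm_num)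
  rw [sub_zero, div_one] at h
  refine h.congr' ?_
  filter_upwards [eventually_ne_atTop 0] with n hn
  have : (n : ℝ) ≠ 0 := by exact_mod_cast hn
  simp only [Pi.div_apply]
  rw [one_sub_div this, div_div_div_cancel_right₀ this]

open Nat in
noncomputable def betaBinomialWeight (n v ℓ : ℕ) : ℝ :=
  ((v : ℝ) - 1) * (n - v)! / (n - v - ℓ)! * (n - ℓ - 2)! / (n - 1)!

lemma cast_factorial_eq_mul_prod_range {m k : ℕ} (h : k ≤ m) :
    (m.factorial : ℝ) = (m - k).factorial * ∏ i ∈ range k, ((m : ℝ) - i) := by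
  rw [← Nat.factorial_mul_descFactorial h, Nat.descFactorial_eq_prod_range, Nat.cast_mul,
    Nat.cast_prod]
  congr 1
  refine prod_congr rfl fun i hi => ?_
  rw [Nat.cast_sub ((mem_range.mp hi).le.trans h)]

lemma betaBinomialWeight_mul_eq {n v ℓ : ℕ} (h : ℓ + v + 2 ≤ n) (hv : 1 ≤ v) :
    betaBinomialWeight n v ℓ * (n / v) =
      ((v : ℝ) - 1) / v * (n / ((n : ℝ) - 1 - ℓ)) *
        ∏ i ∈ range ℓ, (1 - ((v : ℝ) - 1) / ((n : ℝ) - 1 - i)) := by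
  have hn : (ℓ : ℝ) + v + 2 ≤ n := by exact_mod_cast h
  have hfac_top : ((n - v).factorial : ℝ) =
      (n - v - ℓ).factorial * ∏ i ∈ range ℓ, ((n : ℝ) - v - i) := by
    rw [cast_factorial_eq_mul_prod_range (by omega : ℓ ≤ n - v), Nat.cast_sub (by omega : v ≤ n)]
  have hfac_bot : ((n - 1).factorial : ℝ) =
      (n - ℓ - 2).factorial * ((∏ i ∈ range ℓ, ((n : ℝ) - 1 - i)) * ((n : ℝ) - 1 - ℓ)) := by
    rw [cast_factorial_eq_mul_prod_range (by omega : ℓ + 1 ≤ n - 1), prod_range_succ,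
      Nat.cast_sub (by omega : 1 ≤ n), Nat.cast_one,
      show n - 1 - (ℓ + 1) = n - ℓ - 2 by omega]
  have hpos : ∀ i ∈ range ℓ, (0 : ℝ) < (n : ℝ) - 1 - i := fun i hi => by
    have : (i : ℝ) < ℓ := by exact_mod_cast mem_range.mp hi
    linarith
  have hfactor : ∀ i ∈ range ℓ,
      1 - ((v : ℝ) - 1) / ((n : ℝ) - 1 - i) = ((n : ℝ) - v - i) / ((n : ℝ) - 1 - i) := by
    intro i hi
    field_simp [(hpos i hi).ne']
    ring
  rw [prod_congr rfl hfactor, prod_div_distrib, betaBinomialWeight, hfac_top, hfac_bot]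
  have : (0 : ℝ) < (n : ℝ) - 1 - ℓ := by linarith
  have : (0 : ℝ) < v := by exact_mod_cast hv
  have := (prod_pos hpos).ne'
  field_simp

lemma pow_le_prod_one_sub_div {n v ℓ : ℕ} (h : ℓ + v + 2 ≤ n) (hv : 1 ≤ v) :
    (1 - ((v : ℝ) - 1) / ((n : ℝ) - ℓ)) ^ ℓ ≤
      ∏ i ∈ range ℓ, (1 - ((v : ℝ) - 1) / ((n : ℝ) - 1 - i)) := by
  have hn : (ℓ : ℝ) + v + 2 ≤ n := by exact_mod_cast h
  have hv : (1 : ℝ) ≤ v := by exact_mod_cast hv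
  rw [pow_eq_prod_const]
  refine prod_le_prod (fun i _ => ?_) (fun i hi => ?_)
  · rw [sub_nonneg, div_le_one (by linarith)]
    linarith
  · have : (i : ℝ) + 1 ≤ ℓ := by exact_mod_cast mem_range.mp hi
    exact sub_le_sub_left (div_le_div_of_nonneg_left (by linarith) (by linarith) (by linarith)) 1

lemma prod_one_sub_div_le_pow {n v ℓ : ℕ} (h : ℓ + v + 2 ≤ n) (hv : 1 ≤ v) :
    ∏ i ∈ range ℓ, (1 - ((v : ℝ) - 1) / ((n : ℝ) - 1 - i)) ≤
      (1 - ((v : ℝ) - 1) / ((n : ℝ) - 1)) ^ ℓ := by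
  have hn : (ℓ : ℝ) + v + 2 ≤ n := by exact_mod_cast h
  have hv : (1 : ℝ) ≤ v := by exact_mod_cast hv
  rw [pow_eq_prod_const]
  refine prod_le_prod (fun i hi => ?_) (fun i hi => ?_)
  all_goals have : (i : ℝ) + 1 ≤ ℓ := by exact_mod_cast mem_range.mp hi
  · rw [sub_nonneg, div_le_one (by linarith)]
    linarith
  · have : (0 : ℝ) ≤ i := i.cast_nonneg
    exact sub_le_sub_left (div_le_div_of_nonneg_left (by linarith) (by linarith) (by linarith)) 1

lemma tendsto_prod_one_sub_div {v ℓ : ℕ → ℕ} {x : ℝ}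
    (hsize : ∀ᶠ n in atTop, ℓ n + v n + 2 ≤ n ∧ 1 ≤ v n)
    (hℓn : Tendsto (fun n => (ℓ n : ℝ) / n) atTop (𝓝 0))
    (hvn : Tendsto (fun n => ((v n : ℝ) - 1) / n) atTop (𝓝 0))
    (hℓ : Tendsto (fun n => (ℓ n : ℝ) * ((v n : ℝ) - 1) / n) atTop (𝓝 x)) :
    Tendsto (fun n => ∏ i ∈ range (ℓ n), (1 - ((v n : ℝ) - 1) / ((n : ℝ) - 1 - i)))
      atTop (𝓝 (Real.exp (-x))) := by
  have hpow : ∀ g : ℕ → ℝ, Tendsto (fun n => g n / n) atTop (𝓝 0) →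
      Tendsto (fun n => (1 - ((v n : ℝ) - 1) / (n - g n)) ^ ℓ n) atTop (𝓝 (Real.exp (-x))) := by
    intro g hg
    simp only [sub_eq_add_neg (1 : ℝ)]
    refine tendsto_one_add_pow_exp_of_tendsto_mul ?_ ?_
    · simpa using (tendsto_div_natCast_sub hvn hg).neg
    · simpa [mul_div_assoc] using (tendsto_div_natCast_sub hℓ hg).neg
  refine tendsto_of_tendsto_of_tendsto_of_le_of_le' (hpow _ hℓn)
    (hpow _ tendsto_one_div_atTop_nhds_zero_nat) ?_ ?_
  · filter_upwards [hsize] with n hn using pow_le_prod_one_sub_div hn.1 hn.2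
  · filter_upwards [hsize] with n hn using prod_one_sub_div_le_pow hn.1 hn.2

lemma tendsto_betaBinomialWeight_mul {v ℓ : ℕ → ℕ} {x : ℝ} (hv : Tendsto v atTop atTop)
    (hvn : Tendsto (fun n => (v n : ℝ) / n) atTop (𝓝 0))
    (hℓ : Tendsto (fun n => (ℓ n : ℝ) * v n / n) atTop (𝓝 x)) :
    Tendsto (fun n => betaBinomialWeight n (v n) (ℓ n) * (n / v n)) atTop
      (𝓝 (Real.exp (-x))) := by
  have hv' : Tendsto (fun n => (v n : ℝ)) atTop atTop := tendsto_natCast_atTop_atTop.comp hv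
  have hℓn : Tendsto (fun n => (ℓ n : ℝ) / n) atTop (𝓝 0) := by
    refine (mul_zero x ▸ hℓ.mul hv'.inv_tendsto_atTop).congr' ?_
    filter_upwards [hv.eventually_ge_atTop 1] with n hn
    have : (v n : ℝ) ≠ 0 := by positivity
    simp only [Pi.inv_apply]
    field_simp
  have hone : Tendsto (fun n : ℕ => (1 : ℝ) / n) atTop (𝓝 0) :=
    tendsto_one_div_atTop_nhds_zero_nat
  have hsize : ∀ᶠ n in atTop, ℓ n + v n + 2 ≤ n ∧ 1 ≤ v n := by
    have h := ((hℓn.add hvn).add (hone.const_mul 2))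
    rw [add_zero, mul_zero, add_zero] at h
    filter_upwards [h.eventually_lt_const one_pos, eventually_gt_atTop 0,
      hv.eventually_ge_atTop 1] with n hlt hn hvn1
    refine ⟨?_, hvn1⟩
    have hn : (0 : ℝ) < n := by exact_mod_cast hn
    rw [← add_div, mul_one_div, ← add_div, div_lt_one hn] at hlt
    exact_mod_cast hlt.le
  have hprod := tendsto_prod_one_sub_div hsize hℓn (by simpa [sub_div] using hvn.sub hone)
    (by simpa [mul_sub, sub_div, mul_div_assoc] using hℓ.sub hℓn)
  have hvv : Tendsto (fun n => ((v n : ℝ) - 1) / v n) atTop (𝓝 1) := by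
    refine (sub_zero (1 : ℝ) ▸ tendsto_const_nhds.sub hv'.inv_tendsto_atTop).congr' ?_
    filter_upwards [hv.eventually_ge_atTop 1] with n hn
    have : (v n : ℝ) ≠ 0 := by positivity
    simp [sub_div, div_self this]
  have hnn : Tendsto (fun n : ℕ => (n : ℝ) / (n - (1 + ℓ n))) atTop (𝓝 1) := by
    refine tendsto_div_natCast_sub (tendsto_const_nhds.congr' ?_) ?_
    · filter_upwards [eventually_ne_atTop 0] with n hn
      exact (div_self (Nat.cast_ne_zero.mpr hn)).symm
    · simpa [add_div] using hone.add hℓn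
  refine (one_mul (Real.exp (-x)) ▸ one_mul (1 : ℝ) ▸ (hvv.mul hnn).mul hprod).congr' ?_
  filter_upwards [hsize] with n hn
  rw [betaBinomialWeight_mul_eq hn.1 hn.2, sub_add_eq_sub_sub]

lemma tendsto_natFloor_mul_div_mul {x : ℝ} (hx : 0 ≤ x) {v : ℕ → ℕ}
    (hv : ∀ᶠ n in atTop, 1 ≤ v n) (hvn : Tendsto (fun n => (v n : ℝ) / n) atTop (𝓝 0)) :
    Tendsto (fun n => (⌊x * n / v n⌋₊ : ℝ) * v n / n) atTop (𝓝 x) := by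
  refine tendsto_of_tendsto_of_tendsto_of_le_of_le' (sub_zero x ▸ tendsto_const_nhds.sub hvn)
    tendsto_const_nhds ?_ ?_
  all_goals
    filter_upwards [hv, eventually_gt_atTop 0] with n hv hn
    have hv : (0 : ℝ) < v n := by exact_mod_cast hv
    have hn : (0 : ℝ) < n := by exact_mod_cast hn
  · calc x - v n / n = (x * n / v n - 1) * v n / n := by field_simp
      _ ≤ _ := by gcongr; exact (Nat.sub_one_lt_floor _).le
  · calc (⌊x * n / v n⌋₊ : ℝ) * v n / n ≤ x * n / v n * v n / n := by
          gcongr; exact Nat.floor_le (by positivity)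
      _ = x := by field_simp

/-- Local limit theorem for the beta-binomial distribution: for `x > 0` and
`v_n → ∞` with `v_n/n → 0`, with
`p_n(ℓ) = (v_n−1)·(n−v_n)!/(n−v_n−ℓ)!·(n−ℓ−2)!/(n−1)!`, one has
`p_n(⌊x n / v_n⌋) · (n/v_n) → e^{−x}`. -/
theorem stmt_12 (x : ℝ) (hx : 0 < x) (v : ℕ → ℕ)
    (hv : Tendsto v atTop atTop)
    (hvn : Tendsto (fun n : ℕ => (v n : ℝ) / n) atTop (nhds 0)) :
    Tendsto (fun n : ℕ =>
        (((v n : ℝ) - 1) * (Nat.factorial (n - v n))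
            / (Nat.factorial (n - v n - ⌊x * n / v n⌋₊))
            * (Nat.factorial (n - ⌊x * n / v n⌋₊ - 2)) / (Nat.factorial (n - 1)))
          * (n / (v n : ℝ)))
      atTop (nhds (Real.exp (-x))) :=
  tendsto_betaBinomialWeight_mul hv hvn
    (tendsto_natFloor_mul_div_mul hx.le (hv.eventually_ge_atTop 1) hvn)
end
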